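/- arXiv:1810.03347 — 2 statements merged into one kernel-verified Lean document; each statement's English description precedes it below -/
import Mathlib

section
/- Let A and B be real analytic (or C^1) functions on a neighborhood of the origin in R^2 defining the vector field Z = A ∂_x + B ∂_y, and suppose there exist continuous functions f, g with ∂_x A + ∂_y B = f·A + g·B. If Z(0)=0 and the Jacobian matrix of Z at 0 has at least one eigenvalue with nonzero real part (elementary singularity), then the trace of the Jacobian of Z at 0 is zero and the determinant of the Jacobian of Z at 0 is strictly negative; i.e., 0 is a saddle point. -/
/-!
The trace of the Jacobian is the divergence `∂ₓA + ∂_yB` at the origin, which equals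
`f 0 · A 0 + g 0 · B 0 = 0`. The characteristic equation then reads `λ² = -det`; a complex
number with real square and nonzero real part is real, so `det = -λ² < 0`.
-/

theorem Complex.im_eq_zero_of_sq_eq_ofReal {z : ℂ} {r : ℝ} (h : z ^ 2 = r) (hre : z.re ≠ 0) :
    z.im = 0 := by
  have him : z.re * z.im + z.im * z.re = 0 := by
    simpa [sq, Complex.mul_im] using congrArg Complex.im h
  exact (mul_eq_zero.mp (show z.re * z.im = 0 by linarith)).resolve_left hre

theorem neg_of_sq_add_ofReal_eq_zero {z : ℂ} {d : ℝ} (h : z ^ 2 + d = 0) (hre : z.re ≠ 0) :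
    d < 0 := by
  have hsq : z ^ 2 = ((-d : ℝ) : ℂ) := by push_cast; linear_combination h
  have him := Complex.im_eq_zero_of_sq_eq_ofReal hsq hre
  have hd : -d = z.re ^ 2 := by
    simpa [sq, Complex.mul_re, him] using (congrArg Complex.re hsq).symm
  linarith [sq_pos_of_ne_zero hre]

theorem stmt0_general (U : Set (ℝ × ℝ)) (h0 : (0 : ℝ × ℝ) ∈ U)
    (A B f g : ℝ × ℝ → ℝ)
    (hdiv : ∀ p ∈ U, fderiv ℝ A p (1, 0) + fderiv ℝ B p (0, 1) = f p * A p + g p * B p)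
    (hA0 : A 0 = 0) (hB0 : B 0 = 0)
    (tr det : ℝ)
    (htr : tr = fderiv ℝ A 0 (1, 0) + fderiv ℝ B 0 (0, 1))
    (helem : ∃ lam : ℂ, lam ^ 2 - (tr : ℂ) * lam + (det : ℂ) = 0 ∧ lam.re ≠ 0) :
    tr = 0 ∧ det < 0 := by
  have htr0 : tr = 0 := by
    rw [htr, hdiv 0 h0, hA0, hB0]; ring
  obtain ⟨lam, hchar, hre⟩ := helem
  refine ⟨htr0, neg_of_sq_add_ofReal_eq_zero ?_ hre⟩
  simpa [htr0] using hchar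

/-- If a planar C¹ vector field `Z = A ∂ₓ + B ∂_y` near the origin satisfies the
divergence identity `∂ₓA + ∂_yB = f·A + g·B` with `f, g` continuous, vanishes at the
origin, and the origin is an elementary singularity (the Jacobian has an eigenvalue
with nonzero real part), then the trace of the Jacobian at `0` vanishes and its
determinant is strictly negative, i.e. the origin is a saddle point. -/
theorem stmt0 (U : Set (ℝ × ℝ)) (hU : IsOpen U) (h0 : (0 : ℝ × ℝ) ∈ U)
    (A B f g : ℝ × ℝ → ℝ)
    (hA : ContDiffOn ℝ 1 A U) (hB : ContDiffOn ℝ 1 B U)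
    (hf : ContinuousOn f U) (hg : ContinuousOn g U)
    (hdiv : ∀ p ∈ U, fderiv ℝ A p (1, 0) + fderiv ℝ B p (0, 1) = f p * A p + g p * B p)
    (hA0 : A 0 = 0) (hB0 : B 0 = 0)
    (tr det : ℝ)
    (htr : tr = fderiv ℝ A 0 (1, 0) + fderiv ℝ B 0 (0, 1))
    (hdet : det = fderiv ℝ A 0 (1, 0) * fderiv ℝ B 0 (0, 1)
      - fderiv ℝ A 0 (0, 1) * fderiv ℝ B 0 (1, 0))
    (helem : ∃ lam : ℂ, lam ^ 2 - (tr : ℂ) * lam + (det : ℂ) = 0 ∧ lam.re ≠ 0) :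
    tr = 0 ∧ det < 0 :=
  stmt0_general U h0 A B f g hdiv hA0 hB0 tr det htr helem
end

section
/- Let φ: ℝ₊ × ℝ → ℝ be a function such that φ is C¹ and, for some positive integer k, the map (t, x₁) ↦ φ(x₁, t^k) is analytic. Writing φ(x₁, x₂) = Σ_{i,j} a_{i,j} x₁^i x₂^{j/k} as a convergent Puiseux series on x₂ ≥ 0, the C¹ assumption forces a_{i,j} = 0 unless j = 0 or j ≥ k; consequently ∂φ/∂x₂ is Hölder continuous with exponent 1/k, i.e., φ is of class C^{1,1/k}. -/
/-!
Write `g (t ^ k) = ∑ aⱼ tʲ`. Since `g` is differentiable at `0` from the right,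
`g (t ^ k) - g 0 = O(t ^ k)` as `t → 0⁺`, and comparing with the Taylor expansion kills the
coefficients `aⱼ` with `0 < j < k`. Hence `g (t ^ k) = g 0 + t ^ k H t` with `H` analytic, that is
`g x = g 0 + x H (x ^ (1/k))` for `x ≥ 0`, and so `g' x = Φ (x ^ (1/k))` with
`Φ s = H s + (s / k) H' s` analytic. Near `0` the function `Φ` is Lipschitz and `x ↦ x ^ (1/k)` is
`1/k`-Hölder on `[0, ∞)`, so `g'` is `1/k`-Hölder.
-/

open Set Filter Topology Asymptotics Function
open scoped NNReal

theorem HasFPowerSeriesAt.exists_analyticAt_eq_add_pow_smul {𝕜 E : Type*}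
    [NontriviallyNormedField 𝕜] [NormedAddCommGroup E] [NormedSpace 𝕜 E] {f : 𝕜 → E}
    {p : FormalMultilinearSeries 𝕜 𝕜 E} {z₀ : 𝕜} (hf : HasFPowerSeriesAt f p z₀) {n : ℕ}
    (hn : 0 < n) (hp : ∀ i, 0 < i → i < n → p.coeff i = 0) :
    ∃ H : 𝕜 → E, AnalyticAt 𝕜 H z₀ ∧ ∀ z, f z = f z₀ + (z - z₀) ^ n • H z := by
  obtain ⟨m, rfl⟩ := Nat.exists_eq_add_of_lt hn
  have hf' := hf.has_fpower_series_dslope_fslope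
  refine ⟨(swap dslope z₀)^[m] (dslope f z₀), ⟨_, hf'.has_fpower_series_iterate_dslope_fslope m⟩,
    fun z => ?_⟩
  have hvanish : ∀ i < m, (swap dslope z₀)^[i] (dslope f z₀) z₀ = 0 := fun i hi => by
    rw [← (hf'.has_fpower_series_iterate_dslope_fslope i).coeff_zero 1,
      ← FormalMultilinearSeries.coeff, FormalMultilinearSeries.coeff_iterate_fslope,
      FormalMultilinearSeries.coeff_fslope, hp _ (by omega) (by omega)]
  rw [zero_add, pow_succ', mul_smul, pow_sub_smul_iterate_dslope_of_zero m hvanish,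
    sub_smul_dslope, add_sub_cancel]

section RealVariable

variable {E : Type*} [NormedAddCommGroup E] [NormedSpace ℝ E]

lemma eq_zero_of_pow_smul_isLittleO {a : E} {j : ℕ}
    (h : (fun t : ℝ => t ^ j • a) =o[𝓝[>] 0] fun t => t ^ j) : a = 0 := by
  by_contra ha
  have hlower : (fun t : ℝ => t ^ j) =O[𝓝[>] 0] fun t => t ^ j • a :=
    IsBigO.of_bound ‖a‖⁻¹ (Eventually.of_forall fun t => by
      rw [norm_smul, mul_comm, mul_inv_cancel_right₀ (norm_ne_zero_iff.2 ha)])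
  refine isLittleO_irrefl (Eventually.frequently ?_) (hlower.trans_isLittleO h)
  filter_upwards [self_mem_nhdsWithin] with t (ht : 0 < t) using pow_ne_zero j ht.ne'

theorem HasFPowerSeriesAt.coeff_eq_zero_of_sub_isBigO_pow {f : ℝ → E}
    {p : FormalMultilinearSeries ℝ ℝ E} (hf : HasFPowerSeriesAt f p 0) {n : ℕ}
    (h : (fun t => f t - f 0) =O[𝓝[>] 0] fun t => t ^ n) {j : ℕ} (hj : 0 < j) (hjn : j < n) :
    p.coeff j = 0 := by
  induction j using Nat.strong_induction_on with
  | _ j ih =>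
    have hpartial : ∀ t : ℝ, p.partialSum (j + 1) t = f 0 + t ^ j • p.coeff j := fun t => by
      rw [FormalMultilinearSeries.partialSum, Finset.sum_range_succ,
        Finset.sum_eq_single_of_mem 0 (Finset.mem_range.2 hj), hf.coeff_zero,
        p.apply_eq_pow_smul_coeff]
      intro i hi hi0
      rw [p.apply_eq_pow_smul_coeff, ih i (Finset.mem_range.1 hi) (Nat.pos_of_ne_zero hi0)
        (by grind), smul_zero]
    have htail : (fun t => f t - p.partialSum (j + 1) t) =o[𝓝 0] fun t => t ^ j := by
      have := (hf.isBigO_sub_partialSum_pow (j + 1)).trans_isLittleO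
        (isLittleO_norm_pow_norm_pow (lt_add_one j))
      simpa only [zero_add, ← norm_pow, isLittleO_norm_right] using this
    refine eq_zero_of_pow_smul_isLittleO (j := j) ?_
    have := (h.trans_isLittleO ((isLittleO_pow_pow hjn).mono nhdsWithin_le_nhds)).sub
      (htail.mono nhdsWithin_le_nhds)
    simpa only [hpartial, sub_sub_sub_cancel_left, add_sub_cancel_left] using this

lemma DifferentiableWithinAt.isBigO_comp_pow_sub {g : ℝ → E}
    (hg : DifferentiableWithinAt ℝ g (Ici 0) 0) {k : ℕ} (hk : k ≠ 0) :
    (fun t => g (t ^ k) - g 0) =O[𝓝[>] 0] fun t => t ^ k := by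
  have hpow : Tendsto (fun t : ℝ => t ^ k) (𝓝[>] 0) (𝓝[≥] 0) := by
    refine tendsto_nhdsWithin_iff.2 ⟨?_, ?_⟩
    · simpa [zero_pow hk] using ((continuous_pow k).tendsto (0 : ℝ)).mono_left nhdsWithin_le_nhds
    · filter_upwards [self_mem_nhdsWithin] with t (ht : 0 < t) using pow_nonneg ht.le k
  simpa only [sub_zero, comp_def] using hg.isBigO_sub.comp_tendsto hpow

lemma hasDerivWithinAt_smul_comp_rpow {H : ℝ → E} {c x : ℝ} (hc : 0 < c) (hx : 0 ≤ x)
    (hH : DifferentiableAt ℝ H (x ^ c)) :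
    HasDerivWithinAt (fun y => y • H (y ^ c)) (H (x ^ c) + (c * x ^ c) • deriv H (x ^ c))
      (Ici 0) x := by
  rcases hx.eq_or_lt with rfl | hx
  · rw [Real.zero_rpow hc.ne'] at hH ⊢
    rw [mul_zero, zero_smul, add_zero, hasDerivWithinAt_iff_tendsto_slope, Ici_sdiff_left]
    have hrpow : Tendsto (fun y : ℝ => y ^ c) (𝓝[>] 0) (𝓝 0) := by
      simpa [Real.zero_rpow hc.ne'] using
        (Real.continuousAt_rpow_const 0 c (Or.inr hc.le)).tendsto.mono_left nhdsWithin_le_nhds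
    -- the slope of `y ↦ y • H (y ^ c)` between `0` and `y` is `H (y ^ c)`
    refine (hH.continuousAt.tendsto.comp hrpow).congr' ?_
    filter_upwards [self_mem_nhdsWithin] with y (hy : 0 < y)
    simp [slope_def_module, Real.zero_rpow hc.ne', hy.ne']
  · have hrpow := Real.hasDerivAt_rpow_const (p := c) (Or.inl hx.ne')
    refine (((hasDerivAt_id' x).smul (hH.hasDerivAt.scomp x hrpow)).congr_deriv ?_).hasDerivWithinAt
    rw [smul_smul, Real.rpow_sub_one hx.ne', one_smul, add_comm, comp_apply]
    congr 2
    field_simp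

end RealVariable

lemma Real.abs_rpow_sub_rpow_le {c : ℝ} (hc0 : 0 ≤ c) (hc1 : c ≤ 1) {x y : ℝ} (hx : 0 ≤ x)
    (hy : 0 ≤ y) : |x ^ c - y ^ c| ≤ |x - y| ^ c := by
  wlog hyx : y ≤ x generalizing x y
  · rw [abs_sub_comm, abs_sub_comm x]
    exact this hy hx (le_of_not_ge hyx)
  have hsub : 0 ≤ x - y := sub_nonneg.2 hyx
  have hsum := Real.rpow_add_le_add_rpow hsub hy hc0 hc1
  rw [sub_add_cancel] at hsum
  rw [abs_of_nonneg (sub_nonneg.2 (Real.rpow_le_rpow hy hyx hc0)), abs_of_nonneg hsub]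
  linarith

lemma Real.holderOnWith_rpow {c : ℝ≥0} (hc : c ≤ 1) :
    HolderOnWith 1 c (fun x : ℝ => x ^ (c : ℝ)) (Ici 0) := by
  intro x hx y hy
  rw [ENNReal.coe_one, one_mul, edist_dist, edist_dist, Real.dist_eq, Real.dist_eq,
    ENNReal.ofReal_rpow_of_nonneg (abs_nonneg _) c.coe_nonneg]
  exact ENNReal.ofReal_le_ofReal (Real.abs_rpow_sub_rpow_le c.coe_nonneg hc hx hy)

theorem exists_holderOnWith_derivWithin_of_eq_add_smul_rpow {E : Type*} [NormedAddCommGroup E]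
    [NormedSpace ℝ E] [CompleteSpace E] {g H : ℝ → E} {c : ℝ≥0} (hc0 : 0 < c) (hc1 : c ≤ 1)
    (hH : AnalyticAt ℝ H 0) (hg : ∀ x, 0 ≤ x → g x = g 0 + x • H (x ^ (c : ℝ)))
    {ε : ℝ} (hε : 0 < ε) :
    ∃ ε' : ℝ, 0 < ε' ∧ ε' ≤ ε ∧
      ∃ C : ℝ≥0, HolderOnWith C c (derivWithin g (Ici 0)) (Icc 0 ε') := by
  set Φ : ℝ → E := fun s => H s + (c * s) • deriv H s
  have hΦ : AnalyticAt ℝ Φ 0 := hH.add ((analyticAt_const.mul analyticAt_id).smul hH.deriv)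
  obtain ⟨L, t, ht, hLip⟩ := (hΦ.contDiffAt (n := 1)).exists_lipschitzOnWith
  have hrpow : Tendsto (fun x : ℝ => x ^ (c : ℝ)) (𝓝 0) (𝓝 0) := by
    simpa [Real.zero_rpow (NNReal.coe_ne_zero.2 hc0.ne')] using
      (Real.continuousAt_rpow_const 0 c (Or.inr c.coe_nonneg)).tendsto
  obtain ⟨δ, hδ, hnear⟩ := Metric.eventually_nhds_iff.1 <| hrpow.eventually <|
    Filter.Eventually.and ht (hH.eventually_analyticAt.mono fun s hs => hs.differentiableAt)
  set ε' := min ε (δ / 2)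
  have hIcc : ∀ x ∈ Icc 0 ε', x ^ (c : ℝ) ∈ t ∧ DifferentiableAt ℝ H (x ^ (c : ℝ)) :=
    fun x hx => hnear <| by
      rw [Real.dist_eq, sub_zero, abs_of_nonneg hx.1]
      linarith [hx.2.trans (min_le_right _ _)]
  have hderiv : ∀ x ∈ Icc 0 ε', derivWithin g (Ici 0) x = Φ (x ^ (c : ℝ)) := fun x hx =>
    (((hasDerivWithinAt_smul_comp_rpow (NNReal.coe_pos.2 hc0) hx.1 (hIcc x hx).2).const_add
      (g 0)).congr hg (hg x hx.1)).derivWithin (uniqueDiffOn_Ici 0 x hx.1)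
  have hcomp := hLip.holderOnWith.comp ((Real.holderOnWith_rpow hc1).mono Icc_subset_Ici_self)
    fun x hx => (hIcc x hx).1
  refine ⟨ε', by positivity, min_le_left _ _, L, fun x hx y hy => ?_⟩
  rw [hderiv x hx, hderiv y hy]
  simpa using hcomp x hx y hy

/-- Puiseux regularity: if `g` is `C¹` on `[0, ε)` and `t ↦ g(t^k)` is analytic at `0`
for a positive integer `k`, then in the power series `g(t^k) = Σ aⱼ tʲ` the
coefficients `aⱼ` vanish unless `j = 0` or `j ≥ k`, and consequently the derivative
of `g` is `(1/k)`-Hölder continuous near `0` (i.e. `g` is of class `C^{1,1/k}`). -/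
theorem stmt8 (ε : ℝ) (hε : 0 < ε) (k : ℕ) (hk : 1 ≤ k) (g : ℝ → ℝ)
    (hg : ContDiffOn ℝ 1 g (Ico 0 ε))
    (han : AnalyticAt ℝ (fun t : ℝ => g (t ^ k)) 0) :
    (∃ p : FormalMultilinearSeries ℝ ℝ ℝ,
      HasFPowerSeriesAt (fun t : ℝ => g (t ^ k)) p 0 ∧
      ∀ j : ℕ, 0 < j → j < k → p.coeff j = 0) ∧
    ∃ ε' : ℝ, 0 < ε' ∧ ε' ≤ ε ∧ ∃ C : NNReal,
      HolderOnWith C ((k : NNReal))⁻¹ (derivWithin g (Ici 0)) (Icc 0 ε') := by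
  obtain ⟨p, hp⟩ := han
  have hk0 : k ≠ 0 := by omega
  have hg0 : DifferentiableWithinAt ℝ g (Ici 0) 0 :=
    (hg.differentiableOn one_ne_zero 0 ⟨le_rfl, hε⟩).mono_of_mem_nhdsWithin (Ico_mem_nhdsGE hε)
  have hcoeff : ∀ j : ℕ, 0 < j → j < k → p.coeff j = 0 := fun _ hj hjk =>
    hp.coeff_eq_zero_of_sub_isBigO_pow
      (by simpa [zero_pow hk0] using hg0.isBigO_comp_pow_sub hk0) hj hjk
  refine ⟨⟨p, hp, hcoeff⟩, ?_⟩
  obtain ⟨H, hH, hgH⟩ := hp.exists_analyticAt_eq_add_pow_smul (Nat.pos_of_ne_zero hk0) hcoeff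
  refine exists_holderOnWith_derivWithin_of_eq_add_smul_rpow (by positivity)
    (inv_le_one_of_one_le₀ (by exact_mod_cast hk)) hH (fun x hx => ?_) hε
  simpa [Real.rpow_inv_natCast_pow hx hk0, zero_pow hk0] using hgH (x ^ ((k : ℝ≥0)⁻¹ : ℝ))
end
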